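/- arXiv:2202.05510 — 2 statements merged into one kernel-verified Lean document; each statement's English description precedes it below -/
import Mathlib

section
/- Suppose y_i > 0 for all i, and suppose there exists w*_{GM} ∈ ℝ^d with ⟨w*_{GM}, x_i⟩ = y_i for all i. Let w : [0,∞) → ℝ^d be a gradient flow of the ReLU loss with initial point w_0 = w(0). Let w*_{loc} ∈ ℝ^d be a point with support vector set S = {i : ⟨w*_{loc}, x_i⟩ > 0}, and suppose ⟨w*_{loc}, x_i⟩ < 0 for all i ∉ S (as holds for any local minimizer, which lies off all activation boundaries). If there exists j ∉ S with x_j ≠ 0 and y_j / ‖x_j‖ ≥ ‖w_0 − w*_{GM}‖, then w(t) does not converge to w*_{loc} as t → ∞. -/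
/-!
Along the flow, the distance to the global minimiser `wGM` never increases: since
`⟪wGM, x i⟫ = y i`, the inner product `⟪F u, u - wGM⟫ = ∑_{⟪u, x i⟫ > 0} ⟪u - wGM, x i⟫ ^ 2` is
nonnegative. Hence a limit `wloc` of the flow satisfies `‖wloc - wGM‖ ≤ ‖w 0 - wGM‖`. On the
other hand, an inactive data point `x j` with `⟪wloc, x j⟫ < 0` forces
`‖wloc - wGM‖ * ‖x j‖ ≥ ⟪wGM - wloc, x j⟫ > y j`, so `wloc` lies farther than `y j / ‖x j‖`
from `wGM`.
-/

open MeasureTheory Set Filter intervalIntegral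
open scoped RealInnerProductSpace

section AbsolutelyContinuous

variable {E : Type*} [NormedAddCommGroup E] [NormedSpace ℝ E]

theorem AbsolutelyContinuousOnInterval.of_dist_le_mul {X Y : Type*} [PseudoMetricSpace X]
    [PseudoMetricSpace Y] {f : ℝ → X} {g : ℝ → Y} {a b K : ℝ}
    (hf : AbsolutelyContinuousOnInterval f a b)
    (hfg : ∀ s ∈ uIcc a b, ∀ t ∈ uIcc a b, dist (g s) (g t) ≤ K * dist (f s) (f t)) :
    AbsolutelyContinuousOnInterval g a b := by
  unfold AbsolutelyContinuousOnInterval at hf ⊢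
  refine squeeze_zero' ?_ ?_ (by simpa using hf.const_mul K)
  · exact Eventually.of_forall fun _ ↦ Finset.sum_nonneg fun _ _ ↦ dist_nonneg
  rw [eventually_inf_principal]
  filter_upwards with ⟨n, I⟩ hnI
  rw [Finset.mul_sum]
  gcongr with i hi
  exact hfg _ (hnI.1 i hi).1 _ (hnI.1 i hi).2

theorem IntervalIntegrable.absolutelyContinuousOnInterval_intervalIntegral' {f : ℝ → E}
    {a b c : ℝ} (hf : IntervalIntegrable f volume a b) (hc : c ∈ uIcc a b) :
    AbsolutelyContinuousOnInterval (fun x ↦ ∫ v in c..x, f v) a b :=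
  (hf.norm.absolutelyContinuousOnInterval_intervalIntegral hc).of_dist_le_mul (K := 1)
    fun s hs t ht ↦ by
      rw [one_mul, dist_eq_norm, dist_comm, Real.dist_eq,
        integral_interval_sub_left (hf.mono_set (uIcc_subset_uIcc hc hs))
          (hf.mono_set (uIcc_subset_uIcc hc ht)),
        integral_interval_sub_left (hf.norm.mono_set (uIcc_subset_uIcc hc ht))
          (hf.norm.mono_set (uIcc_subset_uIcc hc hs)), integral_symm t s, abs_neg]
      exact norm_integral_le_abs_integral_norm

theorem absolutelyContinuousOnInterval_norm_sub_integral_sq {f : ℝ → E} {a b : ℝ}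
    (hf : IntervalIntegrable f volume a b) (v : E) :
    AbsolutelyContinuousOnInterval (fun t ↦ ‖v - ∫ s in a..t, f s‖ ^ 2) a b := by
  have hnorm : AbsolutelyContinuousOnInterval (fun t ↦ ‖v - ∫ s in a..t, f s‖) a b :=
    (hf.absolutelyContinuousOnInterval_intervalIntegral' left_mem_uIcc).of_dist_le_mul (K := 1)
      fun s _ t _ ↦ (dist_norm_norm_le _ _).trans_eq <| by
        rw [sub_sub_sub_cancel_left, one_mul, dist_eq_norm']
  simpa only [sq] using hnorm.fun_mul hnorm

end AbsolutelyContinuous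

section Integrable

variable {E F : Type*} [NormedAddCommGroup E] [MeasurableSpace E] [BorelSpace E]
  [NormedAddCommGroup F] [MeasurableSpace F] [BorelSpace F] [SecondCountableTopology F]

theorem ContinuousOn.intervalIntegrable_comp_of_norm_le {G : E → F} {g : E → ℝ}
    (hG : Measurable G) (hg : Continuous g) (hGg : ∀ u, ‖G u‖ ≤ g u) {w : ℝ → E} {a b : ℝ}
    (hw : ContinuousOn w (uIcc a b)) : IntervalIntegrable (fun s ↦ G (w s)) volume a b := by
  refine (hg.comp_continuousOn hw).intervalIntegrable.mono_fun' ?_ (ae_of_all _ fun s ↦ hGg _)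
  exact (hG.comp_aemeasurable ((hw.aemeasurable measurableSet_uIcc).mono_measure
    (Measure.restrict_mono uIoc_subset_uIcc le_rfl))).aestronglyMeasurable

end Integrable

section Flow

variable {E : Type*} [NormedAddCommGroup E] [InnerProductSpace ℝ E] [CompleteSpace E]

theorem norm_sub_le_of_eq_sub_integral_of_inner_nonneg {f w : ℝ → E} {c : E} {T : ℝ}
    (hT : 0 ≤ T) (hf : IntervalIntegrable f volume 0 T)
    (hw : ∀ t ∈ Icc 0 T, w t = w 0 - ∫ s in 0..t, f s)
    (hfc : ∀ᵐ t, t ∈ Icc 0 T → 0 ≤ ⟪f t, w t - c⟫) :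
    ‖w T - c‖ ≤ ‖w 0 - c‖ := by
  set φ : ℝ → ℝ := fun t ↦ ‖(w 0 - c) - ∫ s in 0..t, f s‖ ^ 2
  have hφ_eq : ∀ t ∈ Icc 0 T, φ t = ‖w t - c‖ ^ 2 := fun t ht ↦ by
    simp only [φ, hw t ht, sub_right_comm]
  have hderiv : ∀ᵐ t ∂volume.restrict (Icc 0 T), deriv φ t ≤ 0 := by
    rw [ae_restrict_iff' measurableSet_Icc]
    filter_upwards [hf.ae_hasDerivAt_integral, hfc] with t hint hfct ht
    have hdt := ((hint (uIcc_of_le hT ▸ ht) 0 left_mem_uIcc).const_sub (w 0 - c)).norm_sq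
    rw [hdt.deriv, sub_right_comm, ← hw t ht, inner_neg_right, real_inner_comm]
    linarith [hfct ht]
  -- An a.e. nonpositive derivative alone would not do (Cantor-type functions); absolute
  -- continuity of `φ` is what makes the fundamental theorem of calculus available.
  have hFTC :=
    (absolutelyContinuousOnInterval_norm_sub_integral_sq hf (w 0 - c)).integral_deriv_eq_sub
  rw [← pow_le_pow_iff_left₀ (norm_nonneg _) (norm_nonneg _) two_ne_zero,
    ← hφ_eq T ⟨hT, le_rfl⟩, ← hφ_eq 0 ⟨le_rfl, hT⟩, ← sub_nonpos, ← hFTC, ← neg_nonneg,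
    ← intervalIntegral.integral_neg]
  exact integral_nonneg_of_ae_restrict hT (hderiv.mono fun t ht ↦ neg_nonneg.2 ht)

end Flow

section ReLU

variable {ι E : Type*} [Fintype ι] [NormedAddCommGroup E] [InnerProductSpace ℝ E]

theorem div_norm_lt_norm_sub_of_inner_neg {u v z : E} (hz : ⟪v, z⟫ < 0) :
    ⟪u, z⟫ / ‖z‖ < ‖v - u‖ := by
  have hz0 : 0 < ‖z‖ := norm_pos_iff.2 fun h ↦ by simp [h] at hz
  rw [div_lt_iff₀ hz0]
  have := neg_le_of_abs_le (abs_real_inner_le_norm (v - u) z)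
  rw [inner_sub_left] at this
  linarith


noncomputable def reluLossGrad (x : ι → E) (y : ι → ℝ) (w : E) : E :=
  ∑ i ∈ Finset.univ.filter (fun i ↦ 0 < ⟪w, x i⟫), (⟪w, x i⟫ - y i) • x i

theorem measurable_reluLossGrad [MeasurableSpace E] [BorelSpace E] [SecondCountableTopology E]
    (x : ι → E) (y : ι → ℝ) : Measurable (reluLossGrad x y) := by
  have hinner (i : ι) : Continuous fun u : E ↦ ⟪u, x i⟫ :=
    continuous_id.inner continuous_const
  unfold reluLossGrad
  simp_rw [Finset.sum_filter]
  exact Finset.measurable_sum _ fun i _ ↦ Measurable.ite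
    (measurableSet_lt measurable_const (hinner i).measurable)
    (((hinner i).sub continuous_const).smul continuous_const).measurable measurable_const

theorem norm_reluLossGrad_le (x : ι → E) (y : ι → ℝ) (u : E) :
    ‖reluLossGrad x y u‖ ≤ ∑ i, (‖u‖ * ‖x i‖ + |y i|) * ‖x i‖ := by
  refine (norm_sum_le _ _).trans <| (Finset.sum_le_sum fun i _ ↦ ?_).trans <|
    Finset.sum_le_sum_of_subset_of_nonneg (Finset.filter_subset _ _) fun i _ _ ↦ by positivity
  rw [norm_smul]
  gcongr
  exact (norm_sub_le _ _).trans (add_le_add (norm_inner_le_norm _ _) le_rfl)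

theorem inner_reluLossGrad_sub_nonneg {x : ι → E} {y : ι → ℝ} {v : E}
    (hv : ∀ i, ⟪v, x i⟫ = y i) (u : E) :
    0 ≤ ⟪reluLossGrad x y u, u - v⟫ := by
  rw [reluLossGrad, sum_inner]
  refine Finset.sum_nonneg fun i _ ↦ ?_
  rw [real_inner_smul_left, inner_sub_right, real_inner_comm u, real_inner_comm v, hv]
  exact mul_self_nonneg _

end ReLU

theorem stmt5_general {n d : ℕ} (x : Fin n → EuclideanSpace ℝ (Fin d)) (y : Fin n → ℝ)
    (F : EuclideanSpace ℝ (Fin d) → EuclideanSpace ℝ (Fin d))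
    (hF : ∀ w, F w = ∑ i ∈ Finset.univ.filter (fun i => 0 < (inner ℝ w (x i) : ℝ)),
        ((inner ℝ w (x i) : ℝ) - y i) • x i)
    (wGM : EuclideanSpace ℝ (Fin d)) (hGM : ∀ i, (inner ℝ wGM (x i) : ℝ) = y i)
    (w : ℝ → EuclideanSpace ℝ (Fin d))
    (hcont : ContinuousOn w (Set.Ici 0))
    (hflow : ∀ t ≥ (0:ℝ), w t = w 0 - ∫ s in (0:ℝ)..t, F (w s))
    (wloc : EuclideanSpace ℝ (Fin d))
    (S : Set (Fin n))
    (hoff : ∀ i ∉ S, (inner ℝ wloc (x i) : ℝ) < 0)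
    (j : Fin n) (hjS : j ∉ S)
    (hnorm : ‖w 0 - wGM‖ ≤ y j / ‖x j‖) :
    ¬ Filter.Tendsto w Filter.atTop (nhds wloc) := by
  have hF_eq : F = reluLossGrad x y := funext hF
  subst hF_eq
  have hdist : ∀ t ≥ 0, ‖w t - wGM‖ ≤ ‖w 0 - wGM‖ := fun t ht ↦
    norm_sub_le_of_eq_sub_integral_of_inner_nonneg ht
      ((hcont.mono (uIcc_of_le ht ▸ Icc_subset_Ici_self)).intervalIntegrable_comp_of_norm_le
        (measurable_reluLossGrad x y) (by fun_prop) (norm_reluLossGrad_le x y))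
      (fun s hs ↦ hflow s hs.1) (ae_of_all _ fun s _ ↦ inner_reluLossGrad_sub_nonneg hGM (w s))
  intro htend
  have hloc : ‖wloc - wGM‖ ≤ ‖w 0 - wGM‖ :=
    le_of_tendsto (htend.sub_const wGM).norm ((eventually_ge_atTop 0).mono hdist)
  have hfar := div_norm_lt_norm_sub_of_inner_neg (u := wGM) (hoff j hjS)
  rw [hGM] at hfar
  linarith

/-- Gradient flow does not converge to a bad local minimum: if some data point
`x j` outside the support set `S` of `wloc` satisfies `y j / ‖x j‖ ≥ ‖w₀ − wGM‖`,
then the gradient flow started at `w₀` does not converge to `wloc`. -/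
theorem stmt5 {n d : ℕ} (x : Fin n → EuclideanSpace ℝ (Fin d)) (y : Fin n → ℝ)
    (hy : ∀ i, 0 < y i)
    (F : EuclideanSpace ℝ (Fin d) → EuclideanSpace ℝ (Fin d))
    (hF : ∀ w, F w = ∑ i ∈ Finset.univ.filter (fun i => 0 < (inner ℝ w (x i) : ℝ)),
        ((inner ℝ w (x i) : ℝ) - y i) • x i)
    (wGM : EuclideanSpace ℝ (Fin d)) (hGM : ∀ i, (inner ℝ wGM (x i) : ℝ) = y i)
    (w : ℝ → EuclideanSpace ℝ (Fin d))
    (hcont : ContinuousOn w (Set.Ici 0))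
    (hflow : ∀ t ≥ (0:ℝ), w t = w 0 - ∫ s in (0:ℝ)..t, F (w s))
    (wloc : EuclideanSpace ℝ (Fin d))
    (S : Set (Fin n)) (hS : S = {i | 0 < (inner ℝ wloc (x i) : ℝ)})
    (hoff : ∀ i ∉ S, (inner ℝ wloc (x i) : ℝ) < 0)
    (j : Fin n) (hjS : j ∉ S) (hxj : x j ≠ 0)
    (hnorm : ‖w 0 - wGM‖ ≤ y j / ‖x j‖) :
    ¬ Filter.Tendsto w Filter.atTop (nhds wloc) :=
  stmt5_general x y F hF wGM hGM w hcont hflow wloc S hoff j hjS hnorm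
end

section
/- Let H be a symmetric d×d real matrix, let w_0, v ∈ ℝ^d, and let c ∈ ℝ. If the function f(t) = ⟨v, exp(−tH) w_0⟩ − c is not identically zero on ℝ, then f has at most d zeros; i.e., the trajectory t ↦ exp(−tH) w_0 of a linear gradient flow crosses the hyperplane {w : ⟨v, w⟩ = c} at most d times. -/
/-!
Diagonalising `H = U diag(λ) Uᵀ` turns `t ↦ ⟨v, exp(-tH) w₀⟩ - c` into the exponential
polynomial `-c + ∑ᵢ aᵢ e^{-λᵢ t}` with `d` exponential terms. An exponential polynomial
`f(t) = c + ∑_{i ∈ s} aᵢ e^{μᵢ t}` that does not vanish identically has at most `#s` zeros, by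
induction on `s`: `f' = e^{μⱼ t} g(t)` with `g` of the same shape over `s \ {j}`, so by Rolle `f`
has at most one zero more than `g`; and if `g ≡ 0`, then `f` is a nonzero constant.
-/

open Matrix

theorem Finset.card_le_ncard_add_one_of_exists_between {α : Type*} [LinearOrder α]
    {T : Set α} (hT : T.Finite) (u : Finset α)
    (h : ∀ x ∈ u, ∀ y ∈ u, x < y → ∃ t ∈ T, x < t ∧ t < y) :
    u.card ≤ T.ncard + 1 := by
  cases hu : u.card with
  | zero => omega
  | succ m =>
    let e := u.orderEmbOfFin hu
    have hgap (i : Fin m) : ∃ t ∈ T, e i.castSucc < t ∧ t < e i.succ :=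
      h _ (u.orderEmbOfFin_mem hu _) _ (u.orderEmbOfFin_mem hu _)
        (e.strictMono Fin.castSucc_lt_succ)
    choose t htT hlt hgt using hgap
    have ht : StrictMono t := fun i j hij =>
      calc t i < e i.succ := hgt i
        _ ≤ e j.castSucc := e.monotone (Fin.succ_le_castSucc_iff.mpr hij)
        _ < t j := hlt j
    have := Set.ncard_le_ncard_of_injOn (s := Set.univ) t (fun i _ => htT i) ht.injective.injOn hT
    simp only [Set.ncard_univ, Nat.card_eq_fintype_card, Fintype.card_fin] at this
    omega

theorem Set.finite_and_ncard_le_ncard_add_one_of_exists_between {α : Type*} [LinearOrder α]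
    {S T : Set α} (hT : T.Finite) (h : ∀ x ∈ S, ∀ y ∈ S, x < y → ∃ t ∈ T, x < t ∧ t < y) :
    S.Finite ∧ S.ncard ≤ T.ncard + 1 := by
  have hsub (u : Finset α) (hu : ↑u ⊆ S) : u.card ≤ T.ncard + 1 :=
    u.card_le_ncard_add_one_of_exists_between hT fun x hx y hy => h x (hu hx) y (hu hy)
  have hS : S.Finite := by
    by_contra hinf
    obtain ⟨u, hu, hcard⟩ := Set.Infinite.exists_subset_card_eq hinf (T.ncard + 2)
    have := hsub u hu
    omega
  exact ⟨hS, Set.ncard_eq_toFinset_card S hS ▸ hsub _ (by simp)⟩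

theorem finite_zeros_and_ncard_le_of_hasDerivAt {f f' : ℝ → ℝ}
    (hf : ∀ t, HasDerivAt f (f' t) t) (hf' : {t | f' t = 0}.Finite) :
    {t | f t = 0}.Finite ∧ {t | f t = 0}.ncard ≤ {t | f' t = 0}.ncard + 1 := by
  refine Set.finite_and_ncard_le_ncard_add_one_of_exists_between hf' fun x hx y hy hxy => ?_
  obtain ⟨z, hz, hz0⟩ := exists_hasDerivAt_eq_zero hxy
    (fun w _ => (hf w).continuousAt.continuousWithinAt) (hx.trans hy.symm) fun w _ => hf w
  exact ⟨z, hz0, hz.1, hz.2⟩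

section ExpPoly

variable {ι : Type*}

noncomputable def expPoly (c : ℝ) (s : Finset ι) (μ a : ι → ℝ) (t : ℝ) : ℝ :=
  c + ∑ i ∈ s, a i * Real.exp (μ i * t)

theorem hasDerivAt_expPoly (c : ℝ) (s : Finset ι) (μ a : ι → ℝ) (t : ℝ) :
    HasDerivAt (expPoly c s μ a) (∑ i ∈ s, a i * μ i * Real.exp (μ i * t)) t := by
  refine (HasDerivAt.fun_sum fun i _ => ?_).const_add c
  exact (((hasDerivAt_id t).const_mul (μ i)).exp.const_mul (a i)).congr_deriv (by simp; ring)

theorem Finset.sum_insert_mul_exp_eq_exp_mul_expPoly [DecidableEq ι] {s : Finset ι} {j : ι}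
    (hj : j ∉ s) (μ b : ι → ℝ) (t : ℝ) :
    ∑ i ∈ insert j s, b i * Real.exp (μ i * t) =
      Real.exp (μ j * t) * expPoly (b j) s (fun i => μ i - μ j) b t := by
  rw [Finset.sum_insert hj, expPoly, mul_add, Finset.mul_sum, mul_comm]
  congr 1
  refine Finset.sum_congr rfl fun i _ => ?_
  rw [mul_left_comm, ← Real.exp_add]
  ring_nf

theorem expPoly_zeros_finite_and_ncard_le (c : ℝ) (s : Finset ι) (μ a : ι → ℝ)
    (hne : ∃ t, expPoly c s μ a t ≠ 0) :
    {t | expPoly c s μ a t = 0}.Finite ∧ {t | expPoly c s μ a t = 0}.ncard ≤ s.card := by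
  classical
  induction s using Finset.induction_on generalizing c μ a with
  | empty =>
    obtain ⟨t₀, ht₀⟩ := hne
    simp only [expPoly, Finset.sum_empty, add_zero] at ht₀ ⊢
    simp [ht₀]
  | insert j s hj ih =>
    obtain ⟨t₀, ht₀⟩ := hne
    set g := expPoly (a j * μ j) s (fun i => μ i - μ j) (fun i => a i * μ i)
    have hf (t : ℝ) : HasDerivAt (expPoly c (insert j s) μ a) (Real.exp (μ j * t) * g t) t :=
      (hasDerivAt_expPoly c _ μ a t).congr_deriv
        (Finset.sum_insert_mul_exp_eq_exp_mul_expPoly hj μ _ t)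
    have hzeros : {t | Real.exp (μ j * t) * g t = 0} = {t | g t = 0} := by
      ext t; simp [Real.exp_ne_zero]
    by_cases hg : ∃ t, g t ≠ 0
    · obtain ⟨hgfin, hgcard⟩ : {t | g t = 0}.Finite ∧ {t | g t = 0}.ncard ≤ s.card :=
        ih _ _ _ hg
      obtain ⟨hfin, hcard⟩ := finite_zeros_and_ncard_le_of_hasDerivAt hf (hzeros ▸ hgfin)
      rw [hzeros] at hcard
      rw [Finset.card_insert_of_notMem hj]
      exact ⟨hfin, by omega⟩
    · push Not at hg
      have hconst := is_const_of_deriv_eq_zero (fun t => (hf t).differentiableAt)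
        fun t => by rw [(hf t).deriv, hg, mul_zero]
      have : {t | expPoly c (insert j s) μ a t = 0} = ∅ :=
        Set.eq_empty_of_forall_notMem fun t ht => ht₀ (hconst t₀ t ▸ ht)
      simp [this]

end ExpPoly

theorem Matrix.IsHermitian.dotProduct_exp_smul_mulVec {n : Type*} [Fintype n] [DecidableEq n]
    {H : Matrix n n ℝ} (hH : H.IsHermitian) (v w : n → ℝ) (t : ℝ) :
    v ⬝ᵥ NormedSpace.exp (t • H) *ᵥ w =
      ∑ i, (v ᵥ* (hH.eigenvectorUnitary : Matrix n n ℝ)) i *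
        (star (hH.eigenvectorUnitary : Matrix n n ℝ) *ᵥ w) i * Real.exp (hH.eigenvalues i * t) := by
  set U : Matrix n n ℝ := (hH.eigenvectorUnitary : Matrix n n ℝ)
  have hUinv : U⁻¹ = star U := inv_eq_left_inv (Unitary.coe_star_mul_self _)
  have hdiag : t • H = U * diagonal (t • hH.eigenvalues) * U⁻¹ := by
    conv_lhs => rw [hH.spectral_theorem]
    rw [hUinv, Unitary.conjStarAlgAut_apply, ← smul_mul_assoc, ← mul_smul_comm, ← diagonal_smul]
    -- over `ℝ`, `RCLike.ofReal ∘ hH.eigenvalues` is `hH.eigenvalues` by definition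
    rfl
  rw [hdiag, exp_conj U _ ⟨Unitary.toUnits hH.eigenvectorUnitary, rfl⟩, exp_diagonal,
    hUinv, ← mulVec_mulVec, ← mulVec_mulVec, dotProduct_mulVec, dotProduct_mulVec]
  simp only [dotProduct, vecMul_diagonal, Pi.exp_def, ← Real.exp_eq_exp_ℝ, Pi.smul_apply,
    smul_eq_mul]
  exact Finset.sum_congr rfl fun i _ => by ring_nf

/-- The trajectory `t ↦ exp(−tH) w₀` of a linear gradient flow with symmetric
`H` crosses any hyperplane `{w : ⟨v, w⟩ = c}` at most `d` times (unless it stays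
on it). -/
theorem stmt18 {d : ℕ} (H : Matrix (Fin d) (Fin d) ℝ) (hsym : H.IsSymm)
    (w0 v : Fin d → ℝ) (c : ℝ)
    (hne : ¬ ∀ t : ℝ, v ⬝ᵥ (NormedSpace.exp (-(t • H))).mulVec w0 = c) :
    {t : ℝ | v ⬝ᵥ (NormedSpace.exp (-(t • H))).mulVec w0 = c}.Finite ∧
    {t : ℝ | v ⬝ᵥ (NormedSpace.exp (-(t • H))).mulVec w0 = c}.ncard ≤ d := by
  have hH : H.IsHermitian := isHermitian_iff_isSymm.mpr hsym
  set f := expPoly (-c) Finset.univ (fun i => -hH.eigenvalues i) fun i =>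
    (v ᵥ* (hH.eigenvectorUnitary : Matrix _ _ ℝ)) i *
      (star (hH.eigenvectorUnitary : Matrix _ _ ℝ) *ᵥ w0) i with hf
  have hflow (t : ℝ) : v ⬝ᵥ (NormedSpace.exp (-(t • H))).mulVec w0 - c = f t := by
    rw [← neg_smul, hH.dotProduct_exp_smul_mulVec, hf, expPoly, sub_eq_neg_add]
    simp only [mul_neg, neg_mul]
  have hzeros : {t : ℝ | v ⬝ᵥ (NormedSpace.exp (-(t • H))).mulVec w0 = c} = {t | f t = 0} := by
    ext t; simp only [Set.mem_ofPred_eq, ← hflow, sub_eq_zero]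
  push Not at hne
  have hfne : ∃ t, f t ≠ 0 := hne.imp fun t ht => by rwa [← hflow, sub_ne_zero]
  obtain ⟨hfin, hcard⟩ := expPoly_zeros_finite_and_ncard_le _ _ _ _ hfne
  rw [hzeros]
  exact ⟨hfin, by simpa using hcard⟩
end
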